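/- Let H be an infinite-dimensional complex Hilbert space and let M = L(H) be the C*-algebra of all bounded linear operators on H. Then M is not ternary weakly amenable: there exists a continuous ternary derivation from M to M* which is not an inner ternary derivation. -/

import Mathlib

/-!
STATEMENT 4: Let `H` be an infinite-dimensional complex Hilbert space and
`M = L(H) = H →L[ℂ] H` the C*-algebra of all bounded linear operators on `H`,
regarded as a Jordan Banach triple with `{a,b,c} := (a b* c + c b* a)/2`.
Then `M` is not ternary weakly amenable: there exists a continuous (conjugate-linear)
ternary derivation from `M` to `M*` which is not an inner ternary derivation.
-/

open scoped ComplexConjugate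

noncomputable section

section Defs

variable {A : Type*} [NonUnitalNormedRing A] [StarRing A] [NormedSpace ℂ A]
  [IsScalarTower ℂ A A] [SMulCommClass ℂ A A] [StarModule ℂ A]

/-- The triple product `{a,b,c} = (a b* c + c b* a)/2`. -/
def jtrip (a b c : A) : A := (2 : ℂ)⁻¹ • (a * star b * c + c * star b * a)

/-- `δ : A → A*` (continuous, conjugate-linear) is a ternary derivation, written out
pointwise on `A*`, where `{a,b,φ}(x) = {φ,b,a}(x) := φ({b,a,x})` and
`{a,φ,b}(x) := conj (φ({a,x,b}))`. -/
def IsTernaryDer (δ : A →L⋆[ℂ] (A →L[ℂ] ℂ)) : Prop :=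
  ∀ a b c x : A, δ (jtrip a b c) x
    = δ a (jtrip b c x) + conj (δ b (jtrip a x c)) + δ c (jtrip b a x)

/-- `δ : A → A*` is an inner ternary derivation: a finite sum of the maps
`a ↦ {b,φ,a} − {φ,b,a}`. -/
def IsInnerTernaryDer (δ : A →L⋆[ℂ] (A →L[ℂ] ℂ)) : Prop :=
  ∃ (n : ℕ) (b : Fin n → A) (φ : Fin n → (A →L[ℂ] ℂ)),
    ∀ a x : A, δ a x
      = ∑ i, (conj (φ i (jtrip (b i) x a)) - φ i (jtrip (b i) a x))

end Defs

set_option linter.unusedSectionVars false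
set_option maxHeartbeats 1000000

section Aux

variable {H : Type*} [NormedAddCommGroup H] [InnerProductSpace ℂ H] [CompleteSpace H]

local notation "⟪" x ", " y "⟫" => @inner ℂ _ _ x y

def twaEta (ξ : H) : (H →L[ℂ] H) →L[ℂ] ℂ :=
  Complex.I • ((innerSL ℂ ξ).comp (ContinuousLinearMap.apply ℂ H ξ))

lemma twaEta_apply (ξ : H) (y : H →L[ℂ] H) :
    twaEta ξ y = Complex.I * ⟪ξ, y ξ⟫ := rfl

lemma conj_twaEta (ξ : H) (y : H →L[ℂ] H) :
    conj (twaEta ξ y) = - twaEta ξ (star y) := by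
  rw [twaEta_apply, twaEta_apply, ContinuousLinearMap.star_eq_adjoint,
    ContinuousLinearMap.adjoint_inner_right]
  rw [map_mul, Complex.conj_I, inner_conj_symm]
  ring

def twaComm (a : H →L[ℂ] H) : (H →L[ℂ] H) →L[ℂ] (H →L[ℂ] H) :=
  ContinuousLinearMap.mul ℂ (H →L[ℂ] H) (star a)
    - (ContinuousLinearMap.mul ℂ (H →L[ℂ] H)).flip (star a)

lemma twaComm_apply (a x : H →L[ℂ] H) : twaComm a x = star a * x - x * star a := rfl

def twaDelta0 (ξ : H) : (H →L[ℂ] H) →ₗ⋆[ℂ] ((H →L[ℂ] H) →L[ℂ] ℂ) where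
  toFun a := (twaEta ξ).comp (twaComm a)
  map_add' a a' := by
    ext x
    simp only [ContinuousLinearMap.comp_apply, ContinuousLinearMap.add_apply, twaComm_apply,
      star_add, add_mul, mul_add, ← map_add]
    congr 1
    abel
  map_smul' c a := by
    ext x
    simp only [ContinuousLinearMap.comp_apply, twaComm_apply, star_smul,
      ContinuousLinearMap.smul_apply, smul_mul_assoc, mul_smul_comm, ← smul_sub, map_smul,
      smul_eq_mul, RingHom.id_apply, starRingEnd_apply]

lemma twaDelta0_bound (ξ : H) (a : H →L[ℂ] H) :
    ‖twaDelta0 ξ a‖ ≤ 2 * ‖twaEta ξ‖ * ‖a‖ := by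
  apply ContinuousLinearMap.opNorm_le_bound _ (by positivity)
  intro x
  have h1 : twaDelta0 ξ a x = twaEta ξ (star a * x - x * star a) := rfl
  rw [h1]
  calc ‖twaEta ξ (star a * x - x * star a)‖
      ≤ ‖twaEta ξ‖ * ‖star a * x - x * star a‖ := (twaEta ξ).le_opNorm _
    _ ≤ ‖twaEta ξ‖ * (2 * ‖a‖ * ‖x‖) := by
        apply mul_le_mul_of_nonneg_left _ (norm_nonneg _)
        calc ‖star a * x - x * star a‖ ≤ ‖star a * x‖ + ‖x * star a‖ := norm_sub_le _ _
          _ ≤ ‖star a‖ * ‖x‖ + ‖x‖ * ‖star a‖ := by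
              gcongr <;> exact norm_mul_le _ _
          _ = 2 * ‖a‖ * ‖x‖ := by rw [norm_star]; ring
    _ = 2 * ‖twaEta ξ‖ * ‖a‖ * ‖x‖ := by ring

def twaDelta (ξ : H) : (H →L[ℂ] H) →L⋆[ℂ] ((H →L[ℂ] H) →L[ℂ] ℂ) :=
  LinearMap.mkContinuous (twaDelta0 ξ) (2 * ‖twaEta ξ‖) (twaDelta0_bound ξ)

lemma twaDelta_apply (ξ : H) (a x : H →L[ℂ] H) :
    twaDelta ξ a x = twaEta ξ (star a * x - x * star a) := rfl

lemma conj_twaDelta (ξ : H) (u v : H →L[ℂ] H) :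
    conj (twaDelta ξ u v) = twaEta ξ (u * star v - star v * u) := by
  rw [twaDelta_apply, conj_twaEta]
  simp only [star_sub, star_mul, star_star]
  rw [← map_neg, neg_sub]

lemma twaDelta_isTernaryDer (ξ : H) : IsTernaryDer (twaDelta ξ) := by
  intro a b c x
  rw [twaDelta_apply, twaDelta_apply, conj_twaDelta, twaDelta_apply, ← map_add, ← map_add]
  congr 1
  simp only [jtrip, star_smul, star_add, star_mul, star_star, Complex.star_def, map_inv₀,
    map_ofNat, smul_add, smul_sub, mul_smul_comm, smul_mul_assoc, mul_add, add_mul,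
    mul_sub, sub_mul, mul_assoc]
  abel

lemma twa_exists_isometries (hH : ¬ FiniteDimensional ℂ H) :
    ∃ s : ℕ → (H →L[ℂ] H), (∀ k, star (s k) * s k = 1) ∧
      ∀ j k, j ≠ k → star (s j) * s k = 0 := by
  obtain ⟨w, b, hb⟩ := exists_hilbertBasis ℂ H
  haveI hinf : Infinite w := by
    by_contra hfin
    rw [not_infinite_iff_finite] at hfin
    apply hH
    have h1 : FiniteDimensional ℂ (Submodule.span ℂ (Set.range (b : w → H))) :=
      FiniteDimensional.span_of_finite ℂ (Set.finite_range _)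
    have h2 : IsClosed ((Submodule.span ℂ (Set.range (b : w → H)) : Submodule ℂ H) : Set H) :=
      Submodule.closed_of_finiteDimensional _
    have h4 : (Submodule.span ℂ (Set.range (b : w → H)) : Submodule ℂ H) = ⊤ := by
      rw [← h2.submodule_topologicalClosure_eq]
      exact b.dense_span
    rw [h4] at h1
    exact Module.Finite.equiv (Submodule.topEquiv)
  obtain ⟨e⟩ : Nonempty (ℕ × w ≃ w) := by
    apply Cardinal.eq.mp
    have h0 : Cardinal.mk (ℕ × w) = Cardinal.aleph0 * Cardinal.mk w := by
      simp [Cardinal.mk_prod]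
    rw [h0]
    exact Cardinal.mul_eq_right (Cardinal.infinite_iff.mp hinf)
      (Cardinal.infinite_iff.mp hinf) Cardinal.aleph0_ne_zero
  set v : ℕ → w → H := fun k i => b (e (k, i)) with hv_def
  have hv : ∀ k, Orthonormal ℂ (v k) := by
    intro k
    exact b.orthonormal.comp _ (fun i j hij => by
      have := e.injective hij
      simpa using this)
  set S : ℕ → (H →ₗᵢ[ℂ] H) := fun k =>
    ((hv k).orthogonalFamily.linearIsometry).comp b.repr.toLinearIsometry with hS_def
  have hSapp : ∀ (k : ℕ) (x : H), HasSum (fun i => (b.repr x) i • v k i) (S k x) := by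
    intro k x
    have h := (hv k).orthogonalFamily.hasSum_linearIsometry (b.repr x)
    simpa [LinearIsometry.toSpanSingleton_apply, hS_def] using h
  have horth : ∀ (j k : ℕ), j ≠ k → ∀ (x y : H), ⟪S j x, S k y⟫ = 0 := by
    intro j k hjk x y
    have h1 : ∀ i : w, ⟪v j i, S k y⟫ = 0 := by
      intro i
      have h2 := (innerSL ℂ (v j i)).hasSum (hSapp k y)
      have h3 : ∀ i' : w, innerSL ℂ (v j i) ((b.repr y) i' • v k i') = 0 := by
        intro i'
        have hne : e (j, i) ≠ e (k, i') := by
          intro hEq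
          exact hjk (congrArg Prod.fst (e.injective hEq))
        simp [inner_smul_right, hv_def, b.orthonormal.2 hne]
      rw [funext h3] at h2
      simpa using h2.unique hasSum_zero
    have h4 := (innerSL ℂ (S k y)).hasSum (hSapp j x)
    have h5 : ∀ i : w, innerSL ℂ (S k y) ((b.repr x) i • v j i) = 0 := by
      intro i
      have : ⟪S k y, v j i⟫ = 0 := by
        rw [← inner_conj_symm, h1 i, map_zero]
      simp [inner_smul_right, this]
    rw [funext h5] at h4
    have h6 : ⟪S k y, S j x⟫ = 0 := by simpa using h4.unique hasSum_zero
    rw [← inner_conj_symm, h6, map_zero]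
  refine ⟨fun k => (S k).toContinuousLinearMap, ?_, ?_⟩
  · intro k
    apply ContinuousLinearMap.ext
    intro x
    apply ext_inner_left ℂ
    intro u
    rw [ContinuousLinearMap.mul_apply, ContinuousLinearMap.one_apply,
      ContinuousLinearMap.star_eq_adjoint, ContinuousLinearMap.adjoint_inner_right]
    simp only [LinearIsometry.coe_toContinuousLinearMap]
    exact (S k).inner_map_map u x
  · intro j k hjk
    apply ContinuousLinearMap.ext
    intro x
    apply ext_inner_left ℂ
    intro u
    rw [ContinuousLinearMap.mul_apply, ContinuousLinearMap.zero_apply,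
      ContinuousLinearMap.star_eq_adjoint, ContinuousLinearMap.adjoint_inner_right,
      inner_zero_right]
    simp only [LinearIsometry.coe_toContinuousLinearMap]
    exact horth j k hjk u x

theorem twaDelta_not_inner (hH : ¬ FiniteDimensional ℂ H) (ξ : H) (hξ : ‖ξ‖ = 1) :
    ¬ IsInnerTernaryDer (twaDelta ξ) := by
  rintro ⟨n, B, Φ, hI⟩
  obtain ⟨s, hs1, hs2⟩ := twa_exists_isometries hH
  set q : ℕ → (H →L[ℂ] H) := fun k => s k * star (s k) with hq
  set t : ℕ → ℝ := fun k => ‖star (s k) ξ‖ ^ 2 with ht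
  have ht0 : ∀ k, 0 ≤ t k := fun k => sq_nonneg _
  have hinner : ∀ k, ⟪ξ, (q k) ξ⟫ = (t k : ℂ) := by
    intro k
    rw [hq]
    rw [ContinuousLinearMap.mul_apply, ContinuousLinearMap.star_eq_adjoint,
      ← ContinuousLinearMap.adjoint_inner_left, ← ContinuousLinearMap.star_eq_adjoint]
    rw [@inner_self_eq_norm_sq_to_K ℂ, ht]
    norm_cast
  -- the two evaluations of δ
  have hδ1 : ∀ k, twaDelta ξ (s k) (s k) = Complex.I * (1 - (t k : ℂ)) := by
    intro k
    rw [twaDelta_apply, twaEta_apply, hs1 k]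
    congr 1
    rw [ContinuousLinearMap.sub_apply, inner_sub_right, ContinuousLinearMap.one_apply,
      @inner_self_eq_norm_sq_to_K ℂ, hξ, hinner k]
    norm_num
  have hδ2 : ∀ k, twaDelta ξ (star (s k)) (star (s k))
      = Complex.I * ((t k : ℂ) - 1) := by
    intro k
    rw [twaDelta_apply, star_star, hs1 k]
    rw [twaEta_apply]
    congr 1
    rw [ContinuousLinearMap.sub_apply, inner_sub_right, ContinuousLinearMap.one_apply,
      @inner_self_eq_norm_sq_to_K ℂ, hξ, hinner k]
    norm_num
  -- jtrip computations
  have hjt1 : ∀ (y : H →L[ℂ] H) (k : ℕ),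
      jtrip y (s k) (s k) = (2:ℂ)⁻¹ • (y + q k * y) := by
    intro y k
    rw [jtrip, mul_assoc y, hs1 k, mul_one, hq]
  have hjt2 : ∀ (y : H →L[ℂ] H) (k : ℕ),
      jtrip y (star (s k)) (star (s k)) = (2:ℂ)⁻¹ • (y * q k + y) := by
    intro y k
    rw [jtrip, star_star, hq, ← mul_assoc y, mul_assoc (star (s k)), ← mul_assoc (star (s k)),
      hs1 k, one_mul]
  -- imaginary-part identities
  have R1 : ∀ k, 1 - t k = ∑ i, (-(Φ i (B i + q k * B i)).im) := by
    intro k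
    have h := hI (s k) (s k)
    rw [hδ1 k] at h
    have him := congrArg Complex.im h
    rw [Complex.mul_im] at him
    simp only [Complex.I_re, Complex.I_im, Complex.sub_re, Complex.one_re, Complex.ofReal_re,
      zero_mul, one_mul, zero_add, Complex.im_sum] at him
    rw [him]
    apply Finset.sum_congr rfl
    intro i _
    rw [hjt1 (B i) k, map_smul, Complex.sub_im, Complex.conj_im, smul_eq_mul, Complex.mul_im]
    norm_num
    ring
  have R2 : ∀ k, t k - 1 = ∑ i, (-(Φ i (B i * q k + B i)).im) := by
    intro k
    have h := hI (star (s k)) (star (s k))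
    rw [hδ2 k] at h
    have him := congrArg Complex.im h
    rw [Complex.mul_im] at him
    simp only [Complex.I_re, Complex.I_im, Complex.sub_re, Complex.one_re, Complex.ofReal_re,
      zero_mul, one_mul, zero_add, Complex.im_sum] at him
    rw [him]
    apply Finset.sum_congr rfl
    intro i _
    rw [hjt2 (B i) k, map_smul, Complex.sub_im, Complex.conj_im, smul_eq_mul, Complex.mul_im]
    norm_num
    ring
  have R3 : ∀ k, 2 * (1 - t k) = ∑ i, (Φ i (B i * q k - q k * B i)).im := by
    intro k
    have h1 := R1 k
    have h2 := R2 k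
    have h3 : ∑ i, (Φ i (B i * q k - q k * B i)).im
        = ∑ i, ((-(Φ i (B i + q k * B i)).im) - (-(Φ i (B i * q k + B i)).im)) := by
      apply Finset.sum_congr rfl
      intro i _
      have : (B i * q k - q k * B i) = (B i * q k + B i) - (B i + q k * B i) := by abel
      rw [this, map_sub, Complex.sub_im]
      ring
    rw [h3, Finset.sum_sub_distrib, ← h1, ← h2]
    ring
  -- sum over k < m
  set Q : ℕ → (H →L[ℂ] H) := fun m => ∑ k ∈ Finset.range m, q k with hQ
  have key : ∀ m : ℕ, 2 * ((m : ℝ) - ∑ k ∈ Finset.range m, t k)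
      = ∑ i, (Φ i (B i * Q m - Q m * B i)).im := by
    intro m
    have h1 : ∑ k ∈ Finset.range m, (2 * (1 - t k))
        = 2 * ((m : ℝ) - ∑ k ∈ Finset.range m, t k) := by
      simp only [mul_sub, mul_one, Finset.sum_sub_distrib, Finset.sum_const,
        Finset.card_range, nsmul_eq_mul, Finset.mul_sum]
      ring
    rw [← h1]
    have h2 : ∀ k, 2 * (1 - t k) = ∑ i, (Φ i (B i * q k - q k * B i)).im := R3
    rw [Finset.sum_congr rfl (fun k _ => h2 k), Finset.sum_comm]
    apply Finset.sum_congr rfl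
    intro i _
    rw [← Complex.im_sum, ← map_sum]
    congr 2
    rw [hQ]
    rw [Finset.mul_sum, Finset.sum_mul, ← Finset.sum_sub_distrib]
  -- norm bound on Q m
  have hQsa : ∀ m, star (Q m) = Q m := by
    intro m
    rw [hQ, star_sum]
    apply Finset.sum_congr rfl
    intro k _
    rw [hq, star_mul, star_star]
  have hqq : ∀ j k, q j * q k = if j = k then q k else 0 := by
    intro j k
    by_cases h : j = k
    · subst h
      rw [if_pos rfl, hq, mul_assoc, ← mul_assoc (star (s j)), hs1 j, one_mul]
    · rw [if_neg h, hq, mul_assoc, ← mul_assoc (star (s j)), hs2 j k h, zero_mul, mul_zero]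
  have hQidem : ∀ m, Q m * Q m = Q m := by
    intro m
    rw [hQ, Finset.sum_mul_sum]
    calc (∑ k1 ∈ Finset.range m, ∑ k2 ∈ Finset.range m, q k1 * q k2)
        = ∑ k1 ∈ Finset.range m, ∑ k2 ∈ Finset.range m, (if k1 = k2 then q k2 else 0) := by
          apply Finset.sum_congr rfl; intro k1 _; apply Finset.sum_congr rfl; intro k2 _
          exact hqq k1 k2
      _ = ∑ k1 ∈ Finset.range m, (if k1 ∈ Finset.range m then q k1 else 0) := by
          apply Finset.sum_congr rfl; intro k1 _
          rw [Finset.sum_ite_eq (Finset.range m) k1 q]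
      _ = ∑ k1 ∈ Finset.range m, q k1 := by
          apply Finset.sum_congr rfl; intro k1 hk1; rw [if_pos hk1]
  have hQnorm : ∀ m, ‖Q m‖ ≤ 1 := by
    intro m
    have h := CStarRing.norm_star_mul_self (x := Q m)
    rw [hQsa m, hQidem m] at h
    nlinarith [norm_nonneg (Q m), sq_nonneg (‖Q m‖ - 1)]
  -- T bound
  have hT : ∀ m, (∑ k ∈ Finset.range m, t k) ≤ 1 := by
    intro m
    have h1 : ((∑ k ∈ Finset.range m, t k : ℝ) : ℂ) = ⟪ξ, (Q m) ξ⟫ := by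
      rw [hQ, ContinuousLinearMap.sum_apply, inner_sum]
      push_cast
      apply Finset.sum_congr rfl
      intro k _
      exact (hinner k).symm
    calc (∑ k ∈ Finset.range m, t k)
        ≤ ‖((∑ k ∈ Finset.range m, t k : ℝ) : ℂ)‖ := by
          rw [Complex.norm_real]
          exact le_abs_self _
      _ = ‖⟪ξ, (Q m) ξ⟫‖ := by rw [h1]
      _ ≤ ‖ξ‖ * ‖(Q m) ξ‖ := norm_inner_le_norm _ _
      _ ≤ ‖ξ‖ * (‖Q m‖ * ‖ξ‖) := by
          apply mul_le_mul_of_nonneg_left ((Q m).le_opNorm ξ) (norm_nonneg _)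
      _ ≤ 1 := by rw [hξ]; simpa using hQnorm m
  -- final bound
  set C : ℝ := ∑ i : Fin n, 2 * ‖Φ i‖ * ‖B i‖ with hC
  have hbound : ∀ m : ℕ, 2 * ((m : ℝ) - ∑ k ∈ Finset.range m, t k) ≤ C := by
    intro m
    rw [key m, hC]
    apply Finset.sum_le_sum
    intro i _
    calc (Φ i (B i * Q m - Q m * B i)).im
        ≤ |(Φ i (B i * Q m - Q m * B i)).im| := le_abs_self _
      _ ≤ ‖Φ i (B i * Q m - Q m * B i)‖ := Complex.abs_im_le_norm _
      _ = ‖Φ i (B i * Q m - Q m * B i)‖ := rfl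
      _ ≤ ‖Φ i‖ * ‖B i * Q m - Q m * B i‖ := (Φ i).le_opNorm _
      _ ≤ ‖Φ i‖ * (2 * ‖B i‖) := by
          apply mul_le_mul_of_nonneg_left _ (norm_nonneg _)
          calc ‖B i * Q m - Q m * B i‖ ≤ ‖B i * Q m‖ + ‖Q m * B i‖ := norm_sub_le _ _
            _ ≤ ‖B i‖ * ‖Q m‖ + ‖Q m‖ * ‖B i‖ := by gcongr <;> exact norm_mul_le _ _
            _ ≤ ‖B i‖ * 1 + 1 * ‖B i‖ := by
                have := hQnorm m
                have := norm_nonneg (B i)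
                have := norm_nonneg (Q m)
                nlinarith
            _ = 2 * ‖B i‖ := by ring
      _ = 2 * ‖Φ i‖ * ‖B i‖ := by ring
  obtain ⟨m, hm⟩ := exists_nat_gt ((C + 2) / 2)
  have h1 := hbound m
  have h2 := hT m
  have : 2 * ((m : ℝ) - 1) ≤ C := by nlinarith
  nlinarith

end Aux

/-- `L(H)` is not ternary weakly amenable for infinite-dimensional `H`. -/
theorem bounded_operators_not_ternary_weakly_amenable
    (H : Type*) [NormedAddCommGroup H] [InnerProductSpace ℂ H] [CompleteSpace H]
    (hH : ¬ FiniteDimensional ℂ H) :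
    ∃ δ : (H →L[ℂ] H) →L⋆[ℂ] ((H →L[ℂ] H) →L[ℂ] ℂ),
      IsTernaryDer δ ∧ ¬ IsInnerTernaryDer δ := by
  have hnt : Nontrivial H := by
    by_contra h
    rw [not_nontrivial_iff_subsingleton] at h
    exact hH inferInstance
  obtain ⟨x0, hx0⟩ := exists_ne (0 : H)
  have hx0' : ‖x0‖ ≠ 0 := norm_ne_zero_iff.mpr hx0
  refine ⟨twaDelta (‖x0‖⁻¹ • x0), twaDelta_isTernaryDer _, twaDelta_not_inner hH _ ?_⟩
  rw [norm_smul, norm_inv, norm_norm, inv_mul_cancel₀ hx0']
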